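/- For all n, k: ∑_{j=0}^{n} C(n+1, 2n-2j)·T(j+1, k+1) = LS(n+1, k+1), relating central factorial numbers of the second kind to Legendre-Stirling numbers. -/
import Mathlib


/-- Central factorial numbers of the second kind:
T(n,k) = T(n-1,k-1) + k² T(n-1,k), T(0,k)=[k=0], T(n,0)=[n=0]. -/
def centralFactorialT : ℕ → ℕ → ℕ
  | 0, 0 => 1
  | 0, _ + 1 => 0
  | _ + 1, 0 => 0
  | n + 1, k + 1 => centralFactorialT n k + (k + 1) ^ 2 * centralFactorialT n (k + 1)

/-- Legendre-Stirling numbers: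
LS(n,k) = LS(n-1,k-1) + k(k+1) LS(n-1,k), LS(0,k)=[k=0], LS(n,0)=[n=0]. -/
def legendreStirling : ℕ → ℕ → ℕ
  | 0, 0 => 1
  | 0, _ + 1 => 0
  | _ + 1, 0 => 0
  | n + 1, k + 1 => legendreStirling n k + (k + 1) * (k + 2) * legendreStirling n (k + 1)


local notation "T" => centralFactorialT
local notation "LS" => legendreStirling

def eAux (m k : ℕ) : ℕ := ∑ i ∈ Finset.range (m + 1), m.choose (2 * i) * T (m - i) k
def oAux (m k : ℕ) : ℕ := ∑ i ∈ Finset.range (m + 1), m.choose (2 * i + 1) * T (m - i) k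

lemma T_zero_succ (k : ℕ) : T 0 (k+1) = 0 := rfl

-- E(m, m+1, k+1) = e m k + (k+1)^2 e m (k+1)
lemma Eshift (m k : ℕ) :
    ∑ i ∈ Finset.range (m + 2), m.choose (2 * i) * T (m + 1 - i) (k + 1)
      = eAux m k + (k + 1) ^ 2 * eAux m (k + 1) := by
  rw [Finset.sum_range_succ]
  have h0 : T (m + 1 - (m + 1)) (k + 1) = 0 := by simp [T_zero_succ]
  rw [h0, mul_zero, add_zero]
  have h1 : ∀ i ∈ Finset.range (m + 1),
      m.choose (2 * i) * T (m + 1 - i) (k + 1)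
        = m.choose (2 * i) * T (m - i) k
          + (k + 1) ^ 2 * (m.choose (2 * i) * T (m - i) (k + 1)) := by
    intro i hi
    have hi' : i ≤ m := Nat.lt_succ_iff.mp (Finset.mem_range.mp hi)
    have : m + 1 - i = (m - i) + 1 := by omega
    rw [this]
    show m.choose (2*i) * (T (m-i) k + (k+1)^2 * T (m-i) (k+1)) = _
    ring
  rw [Finset.sum_congr rfl h1, Finset.sum_add_distrib, ← Finset.mul_sum]
  rfl

lemma Oshift (m k : ℕ) :
    ∑ i ∈ Finset.range (m + 2), m.choose (2 * i + 1) * T (m + 1 - i) (k + 1)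
      = oAux m k + (k + 1) ^ 2 * oAux m (k + 1) := by
  rw [Finset.sum_range_succ]
  have h0 : T (m + 1 - (m + 1)) (k + 1) = 0 := by simp [T_zero_succ]
  rw [h0, mul_zero, add_zero]
  have h1 : ∀ i ∈ Finset.range (m + 1),
      m.choose (2 * i + 1) * T (m + 1 - i) (k + 1)
        = m.choose (2 * i + 1) * T (m - i) k
          + (k + 1) ^ 2 * (m.choose (2 * i + 1) * T (m - i) (k + 1)) := by
    intro i hi
    have hi' : i ≤ m := Nat.lt_succ_iff.mp (Finset.mem_range.mp hi)
    have : m + 1 - i = (m - i) + 1 := by omega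
    rw [this]
    show m.choose (2*i+1) * (T (m-i) k + (k+1)^2 * T (m-i) (k+1)) = _
    ring
  rw [Finset.sum_congr rfl h1, Finset.sum_add_distrib, ← Finset.mul_sum]
  rfl

lemma eRec (m k : ℕ) :
    eAux (m + 1) (k + 1) = (eAux m k + (k + 1) ^ 2 * eAux m (k + 1)) + oAux m (k + 1) := by
  have key : ∀ i ∈ Finset.range (m + 2),
      (m+1).choose (2 * i) * T (m + 1 - i) (k + 1)
        = m.choose (2 * i) * T (m + 1 - i) (k + 1)
          + (if i = 0 then 0 else m.choose (2 * i - 1) * T (m + 1 - i) (k + 1)) := by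
    intro i _
    cases i with
    | zero => simp
    | succ j =>
      simp only [if_neg (Nat.succ_ne_zero j)]
      have : 2 * (j + 1) = (2 * j + 1) + 1 := by ring
      rw [this, Nat.choose_succ_succ]
      have : 2 * j + 1 + 1 - 1 = 2 * j + 1 := by omega
      rw [this]
      ring
  show ∑ i ∈ Finset.range (m + 2), (m+1).choose (2 * i) * T (m + 1 - i) (k + 1) = _
  rw [Finset.sum_congr rfl key, Finset.sum_add_distrib, Eshift]
  congr 1
  -- ∑ if-term = oAux m (k+1)
  rw [Finset.sum_range_succ']
  simp only [if_neg (Nat.succ_ne_zero _), if_pos rfl, add_zero]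
  have : ∀ i ∈ Finset.range (m + 1),
      m.choose (2 * (i+1) - 1) * T (m + 1 - (i+1)) (k + 1)
        = m.choose (2 * i + 1) * T (m - i) (k + 1) := by
    intro i _
    congr 2 <;> omega
  rw [Finset.sum_congr rfl this]
  rfl

lemma oRec (m k : ℕ) :
    oAux (m + 1) (k + 1) = (oAux m k + (k + 1) ^ 2 * oAux m (k + 1))
      + (eAux m k + (k + 1) ^ 2 * eAux m (k + 1)) := by
  have key : ∀ i ∈ Finset.range (m + 2),
      (m+1).choose (2 * i + 1) * T (m + 1 - i) (k + 1)
        = m.choose (2 * i + 1) * T (m + 1 - i) (k + 1)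
          + m.choose (2 * i) * T (m + 1 - i) (k + 1) := by
    intro i _
    rw [Nat.choose_succ_succ]
    ring
  show ∑ i ∈ Finset.range (m + 2), (m+1).choose (2 * i + 1) * T (m + 1 - i) (k + 1) = _
  rw [Finset.sum_congr rfl key, Finset.sum_add_distrib, Oshift, Eshift]

lemma e_zero (m : ℕ) : eAux (m + 1) 0 = 0 := by
  apply Finset.sum_eq_zero
  intro i hi
  rcases Nat.lt_succ_iff_lt_or_eq.mp (Finset.mem_range.mp hi) with h | h
  · have : m + 1 - i = (m - i) + 1 := by omega
    rw [this]
    show (m+1).choose (2*i) * 0 = 0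
    ring
  · subst h
    have : (m+1).choose (2 * (m+1)) = 0 := Nat.choose_eq_zero_of_lt (by omega)
    rw [this, zero_mul]

lemma o_zero (m : ℕ) : oAux (m + 1) 0 = 0 := by
  apply Finset.sum_eq_zero
  intro i hi
  rcases Nat.lt_succ_iff_lt_or_eq.mp (Finset.mem_range.mp hi) with h | h
  · have : m + 1 - i = (m - i) + 1 := by omega
    rw [this]
    show (m+1).choose (2*i+1) * 0 = 0
    ring
  · subst h
    have : (m+1).choose (2 * (m+1) + 1) = 0 := Nat.choose_eq_zero_of_lt (by omega)
    rw [this, zero_mul]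

lemma main (m : ℕ) : ∀ k, eAux m k = LS m k ∧ oAux m k = k * eAux m k := by
  induction m with
  | zero =>
    intro k
    cases k with
    | zero => constructor <;> decide
    | succ j =>
      constructor
      · show 0+1*T 0 (j+1) = LS 0 (j+1)
        rfl
      · show 0+0*T 0 (j+1) = _
        simp [eAux, T_zero_succ]
  | succ m ih =>
    intro k
    cases k with
    | zero =>
      refine ⟨?_, ?_⟩
      · rw [e_zero]; rfl
      · rw [o_zero]; ring
    | succ j =>
      obtain ⟨he1, ho1⟩ := ih j
      obtain ⟨he2, ho2⟩ := ih (j + 1)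
      have hLS : LS (m+1) (j+1) = LS m j + (j+1)*(j+2) * LS m (j+1) := rfl
      constructor
      · rw [eRec, hLS, he1, he2, ho2, he2]
        ring
      · rw [oRec, eRec, ho1, ho2]
        ring


theorem sum_choose_centralFactorialT (n k : ℕ) :
    ∑ j ∈ Finset.range (n + 1), (n + 1).choose (2 * n - 2 * j) * centralFactorialT (j + 1) (k + 1) =
      legendreStirling (n + 1) (k + 1) := by
  have h := (main (n + 1) (k + 1)).1
  rw [← h]
  unfold eAux
  have h0 : T (n + 1 - (n + 1)) (k + 1) = 0 := by simp [T_zero_succ]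
  conv_rhs => rw [Finset.sum_range_succ, h0, mul_zero, add_zero]
  rw [← Finset.sum_range_reflect (fun x => (n+1).choose (2*x) * T (n+1-x) (k+1)) (n+1)]
  apply Finset.sum_congr rfl
  intro j hj
  have hj' : j ≤ n := Nat.lt_succ_iff.mp (Finset.mem_range.mp hj)
  congr 2 <;> omega
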